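/- arXiv:cs/0601089 — 6 statements merged into one kernel-verified Lean document; each statement's English description precedes it below -/
import Mathlib

section
/- (Representer Theorem) Let H_K be the RKHS induced by a positive semi-definite kernel K on X, let (x_1,y_1),...,(x_n,y_n) ∈ X × ℝ, and let λ > 0. Then the minimizer f_λ of f ↦ Σ_{i=1}^n (f(x_i) − y_i)² + λ‖f‖²_{H_K} over H_K exists and lies in the span of {K(·,x_1),...,K(·,x_n)}; i.e., there exists c ∈ ℝⁿ with f_λ = Σ_{i=1}^n c_i K(·,x_i). -/
/-!
The objective depends on `f` only through the evaluations `⟪f, k (x i)⟫` and the norm `‖f‖`.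
Projecting `f` orthogonally onto `V = span {k (x i)}` keeps every evaluation and does not
increase the norm, so it suffices to minimize over the finite-dimensional space `V`, where the
objective is continuous and coercive (it dominates `λ ‖f‖²`) and hence attains its minimum.
-/

open Filter

namespace RegularizedLeastSquares

variable {ι H : Type*} [Fintype ι] [NormedAddCommGroup H] [InnerProductSpace ℝ H]

noncomputable def loss (u : ι → H) (y : ι → ℝ) (lam : ℝ) (f : H) : ℝ :=
  ∑ i, (inner ℝ f (u i) - y i) ^ 2 + lam * ‖f‖ ^ 2

variable (u : ι → H) (y : ι → ℝ) {lam : ℝ}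

theorem mul_norm_sq_le_loss (f : H) : lam * ‖f‖ ^ 2 ≤ loss u y lam f :=
  le_add_of_nonneg_left (Finset.sum_nonneg fun _ _ => sq_nonneg _)

theorem continuous_loss : Continuous (loss u y lam) := by
  unfold loss
  fun_prop

theorem loss_starProjection_le (hlam : 0 ≤ lam) (V : Submodule ℝ H) [V.HasOrthogonalProjection]
    (hu : ∀ i, u i ∈ V) (f : H) : loss u y lam (V.starProjection f) ≤ loss u y lam f := by
  have inner_eq : ∀ i, inner ℝ (V.starProjection f) (u i) = inner ℝ f (u i) := fun i => by
    rw [Submodule.inner_starProjection_left_eq_right, V.starProjection_eq_self_iff.mpr (hu i)]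
  unfold loss
  simp only [inner_eq]
  gcongr
  exact V.norm_starProjection_apply_le f

theorem exists_forall_loss_le_of_finiteDimensional (hlam : 0 < lam) (V : Submodule ℝ H)
    [FiniteDimensional ℝ V] : ∃ v : V, ∀ w : V, loss u y lam v ≤ loss u y lam w := by
  have coercive : Tendsto (fun v : V => loss u y lam v) (cocompact V) atTop := by
    refine tendsto_atTop_mono (fun v => mul_norm_sq_le_loss u y (v : H)) ?_
    exact ((tendsto_pow_atTop two_ne_zero).const_mul_atTop hlam).comp
      (tendsto_norm_cocompact_atTop (E := V))
  exact ((continuous_loss u y).comp continuous_subtype_val).exists_forall_le coercive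

theorem exists_mem_span_forall_loss_le (hlam : 0 < lam) :
    ∃ f ∈ Submodule.span ℝ (Set.range u), ∀ g : H, loss u y lam f ≤ loss u y lam g := by
  set V := Submodule.span ℝ (Set.range u)
  have : FiniteDimensional ℝ V := FiniteDimensional.span_of_finite ℝ (Set.finite_range u)
  obtain ⟨v, hv⟩ := exists_forall_loss_le_of_finiteDimensional u y hlam V
  refine ⟨v, v.2, fun g => ?_⟩
  calc loss u y lam v ≤ loss u y lam (V.starProjection g) := hv ⟨_, V.starProjection_apply_mem g⟩
    _ ≤ loss u y lam g :=
      loss_starProjection_le u y hlam.le V (fun i => Submodule.subset_span ⟨i, rfl⟩) g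

end RegularizedLeastSquares

theorem representer_theorem_general
    {X : Type*} {H : Type*} [NormedAddCommGroup H] [InnerProductSpace ℝ H]
    (k : X → H) (n : ℕ) (x : Fin n → X) (y : Fin n → ℝ) (lam : ℝ) (hlam : 0 < lam) :
    ∃ fl : H,
      (∀ g : H,
        (∑ i, ((inner ℝ fl (k (x i)) : ℝ) - y i) ^ 2 + lam * ‖fl‖ ^ 2)
          ≤ ∑ i, ((inner ℝ g (k (x i)) : ℝ) - y i) ^ 2 + lam * ‖g‖ ^ 2) ∧
      ∃ c : Fin n → ℝ, fl = ∑ i, c i • k (x i) := by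
  obtain ⟨fl, hspan, hmin⟩ :=
    RegularizedLeastSquares.exists_mem_span_forall_loss_le (fun i => k (x i)) y hlam
  obtain ⟨c, hc⟩ := (Submodule.mem_span_range_iff_exists_fun ℝ).mp hspan
  exact ⟨fl, hmin, c, hc.symm⟩

/-- Representer theorem: the regularized kernel least-squares problem over the RKHS
(modeled abstractly: `k x` is the kernel section `K(·,x)` and `f(x) = ⟪f, k x⟫`)
has a minimizer, and it lies in the span of the kernel sections at the data points. -/
theorem representer_theorem
    {X : Type*} {H : Type*} [NormedAddCommGroup H] [InnerProductSpace ℝ H] [CompleteSpace H]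
    (k : X → H) (n : ℕ) (x : Fin n → X) (y : Fin n → ℝ) (lam : ℝ) (hlam : 0 < lam) :
    ∃ fl : H,
      (∀ g : H,
        (∑ i, ((inner ℝ fl (k (x i)) : ℝ) - y i) ^ 2 + lam * ‖fl‖ ^ 2)
          ≤ ∑ i, ((inner ℝ g (k (x i)) : ℝ) - y i) ^ 2 + lam * ‖g‖ ^ 2) ∧
      ∃ c : Fin n → ℝ, fl = ∑ i, c i • k (x i) :=
  representer_theorem_general k n x y lam hlam
end

section
/- (Lemma 1) Let λ_1,...,λ_m > 0 and let (z, f_{λ_1},...,f_{λ_m}) minimize ‖z − y‖² + Σ_{i=1}^m λ_i ‖f_i‖²_{H_K} subject to z_j = f_i(x_j) for all j ∈ {1,...,n} and all i ∈ {1,...,m}. Then f_{λ_1} = f_{λ_2} = ... = f_{λ_m}, and if Σ_i λ_i = λ then f_{λ_1} equals the minimizer f_λ of Σ_j (f(x_j) − y_j)² + λ‖f‖²_{H_K} over H_K. -/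
/-!
Replacing every component by the `λ`-weighted mean of the components preserves the coupling
constraints, which cut out an affine set, and by strict convexity of `‖·‖²` strictly lowers
`Σ λᵢ ‖fᵢ‖²` unless all components coincide. For a constant family `(f, …, f)` the coupled
objective is the centralized risk `Σⱼ (f(xⱼ) − yⱼ)² + λ ‖f‖²`, which is strictly convex and
therefore has a unique minimizer.
-/

open Finset Set
open scoped RealInnerProductSpace

theorem ConvexOn.sum {𝕜 E β ι : Type*} [Semiring 𝕜] [PartialOrder 𝕜] [AddCommMonoid E]
    [AddCommMonoid β] [PartialOrder β] [IsOrderedAddMonoid β] [SMul 𝕜 E] [Module 𝕜 β]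
    {s : Set E} (hs : Convex 𝕜 s) (t : Finset ι) {f : ι → E → β}
    (hf : ∀ i ∈ t, ConvexOn 𝕜 s (f i)) : ConvexOn 𝕜 s fun x => ∑ i ∈ t, f i x := by
  classical
  induction t using Finset.induction_on with
  | empty => simpa only [sum_empty] using convexOn_const 0 hs
  | insert a t ha ih =>
    simp only [sum_insert ha]
    exact (hf a (mem_insert_self a t)).add (ih fun i hi => hf i (mem_insert_of_mem hi))

theorem StrictConvexOn.const_mul {E : Type*} [AddCommMonoid E] [SMul ℝ E] {s : Set E}
    {f : E → ℝ} {c : ℝ} (hc : 0 < c) (hf : StrictConvexOn ℝ s f) :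
    StrictConvexOn ℝ s fun x => c * f x :=
  ⟨hf.1, fun x hx y hy hxy a b ha hb hab => by
    have := mul_lt_mul_of_pos_left (hf.2 hx hy hxy ha hb hab) hc
    simp only [smul_eq_mul] at this ⊢
    linarith⟩

theorem StrictConvexOn.eq_of_forall_sum_le_sum_const {F ι : Type*} [AddCommGroup F] [Module ℝ F]
    {s : Set F} {f : F → ℝ} (hf : StrictConvexOn ℝ s f) {t : Finset ι} {w : ι → ℝ}
    (hw : ∀ i ∈ t, 0 < w i) {p : ι → F} (hp : ∀ i ∈ t, p i ∈ s)
    (hmin : ∀ q ∈ s, ∑ i ∈ t, w i * f (p i) ≤ ∑ i ∈ t, w i * f q) :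
    ∀ i ∈ t, ∀ j ∈ t, p i = p j := by
  intro i hi
  have hW : 0 < ∑ i ∈ t, w i := sum_pos hw ⟨i, hi⟩
  have hw' : ∀ i ∈ t, 0 < w i / ∑ i ∈ t, w i := fun i hi => div_pos (hw i hi) hW
  have hw'_sum : ∑ i ∈ t, w i / ∑ i ∈ t, w i = 1 := by rw [← sum_div, div_self hW.ne']
  refine hf.eq_of_le_map_sum hw' hw'_sum hp ?_ hi
  have hmean := hmin _ (hf.1.sum_mem (fun i hi => (hw' i hi).le) hw'_sum hp)
  rw [← sum_mul] at hmean
  simp only [smul_eq_mul, div_mul_eq_mul_div, ← sum_div]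
  rwa [div_le_iff₀ hW, mul_comm]

section InnerProductSpace

variable {E : Type*} [NormedAddCommGroup E] [InnerProductSpace ℝ E]

theorem norm_smul_add_smul_sq_of_add_eq_one {a b : ℝ} (hab : a + b = 1) (x y : E) :
    ‖a • x + b • y‖ ^ 2 = a * ‖x‖ ^ 2 + b * ‖y‖ ^ 2 - a * b * ‖x - y‖ ^ 2 := by
  obtain rfl : b = 1 - a := by linarith
  rw [norm_add_sq_real, norm_sub_sq_real, norm_smul, norm_smul, real_inner_smul_left,
    real_inner_smul_right, Real.norm_eq_abs, Real.norm_eq_abs, mul_pow, mul_pow, sq_abs, sq_abs]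
  ring

theorem strictConvexOn_univ_norm_sq : StrictConvexOn ℝ univ fun x : E => ‖x‖ ^ 2 := by
  refine ⟨convex_univ, fun x _ y _ hxy a b ha hb hab => ?_⟩
  have : 0 < a * b * ‖x - y‖ ^ 2 := by
    have := norm_pos_iff.mpr (sub_ne_zero.mpr hxy)
    positivity
  simp only [norm_smul_add_smul_sq_of_add_eq_one hab, smul_eq_mul]
  linarith

theorem convexOn_univ_inner_sub_sq (v : E) (c : ℝ) :
    ConvexOn ℝ univ fun g : E => (⟪g, v⟫ - c) ^ 2 :=
  (even_two.convexOn_pow (𝕜 := ℝ)).comp_affineMap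
    ((innerSL ℝ v).toLinearMap.toAffineMap - AffineMap.const ℝ E c) |>.congr fun g _ => by
      simp [real_inner_comm]

theorem convex_setOf_forall_inner_eq {ι : Type*} (v : ι → E) (z : ι → ℝ) :
    Convex ℝ {g : E | ∀ j, ⟪g, v j⟫ = z j} := by
  intro g hg h hh a b _ _ hab j
  simp only [inner_add_left, real_inner_smul_left, hg j, hh j, ← add_mul, hab, one_mul]

def regularizedRisk {ι : Type*} [Fintype ι] (v : ι → E) (y : ι → ℝ) (c : ℝ) (g : E) : ℝ :=
  ∑ j, (⟪g, v j⟫ - y j) ^ 2 + c * ‖g‖ ^ 2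

theorem strictConvexOn_regularizedRisk {ι : Type*} [Fintype ι] (v : ι → E) (y : ι → ℝ) {c : ℝ}
    (hc : 0 < c) : StrictConvexOn ℝ univ (regularizedRisk v y c) :=
  (ConvexOn.sum convex_univ _ fun j _ => convexOn_univ_inner_sub_sq (v j) (y j)).add_strictConvexOn
    (strictConvexOn_univ_norm_sq.const_mul hc)

end InnerProductSpace

theorem fully_coupled_minimizer_components_equal_general
    {X : Type*} {H : Type*} [NormedAddCommGroup H] [InnerProductSpace ℝ H]
    (k : X → H) (n m : ℕ) (x : Fin n → X) (y : Fin n → ℝ)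
    (lam : Fin m → ℝ) (hlam : ∀ i, 0 < lam i)
    (z : Fin n → ℝ) (F : Fin m → H)
    (hfeas : ∀ j : Fin n, ∀ i : Fin m, z j = (inner ℝ (F i) (k (x j)) : ℝ))
    (hmin : ∀ (z2 : Fin n → ℝ) (F2 : Fin m → H),
      (∀ j : Fin n, ∀ i : Fin m, z2 j = (inner ℝ (F2 i) (k (x j)) : ℝ)) →
      (∑ j, (z j - y j) ^ 2) + ∑ i, lam i * ‖F i‖ ^ 2
        ≤ (∑ j, (z2 j - y j) ^ 2) + ∑ i, lam i * ‖F2 i‖ ^ 2) :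
    (∀ i i' : Fin m, F i = F i') ∧
    (∀ flam : H,
      (∀ g : H,
        (∑ j, ((inner ℝ flam (k (x j)) : ℝ) - y j) ^ 2 + (∑ i, lam i) * ‖flam‖ ^ 2)
          ≤ ∑ j, ((inner ℝ g (k (x j)) : ℝ) - y j) ^ 2 + (∑ i, lam i) * ‖g‖ ^ 2) →
      ∀ i : Fin m, F i = flam) := by
  have hconst : ∀ i i', F i = F i' := fun i i' =>
    (strictConvexOn_univ_norm_sq.subset (subset_univ _)
      (convex_setOf_forall_inner_eq (fun j => k (x j)) z)).eq_of_forall_sum_le_sum_const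
      (fun i _ => hlam i) (fun i _ j => (hfeas j i).symm)
      (fun q hq => by simpa using hmin z (fun _ => q) fun j _ => (hq j).symm)
      i (mem_univ i) i' (mem_univ i')
  refine ⟨hconst, fun flam hflam i => ?_⟩
  have hFi : regularizedRisk (fun j => k (x j)) y (∑ i, lam i) (F i)
      ≤ regularizedRisk (fun j => k (x j)) y (∑ i, lam i) flam := by
    have := hmin (fun j => ⟪flam, k (x j)⟫) (fun _ => flam) fun _ _ => rfl
    simp only [hfeas _ i, hconst _ i, ← sum_mul] at this
    exact this
  have hlam_sum : 0 < ∑ i, lam i := sum_pos (fun i _ => hlam i) ⟨i, mem_univ i⟩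
  exact (strictConvexOn_regularizedRisk _ y hlam_sum).eq_of_isMinOn
    (fun g _ => hFi.trans (hflam g)) (fun g _ => hflam g) trivial trivial

/-- Lemma 1: with full coupling constraints `z_j = f_i(x_j)` for all `j` and `i`, the
minimizer of `‖z − y‖² + Σ_i λ_i ‖f_i‖²` has all its function components equal; and if
`Σ_i λ_i = λ`, they equal the minimizer of the centralized regularized problem with
parameter `λ`.  (RKHS modeled abstractly: `f(x) = ⟪f, k x⟫`.) -/
theorem fully_coupled_minimizer_components_equal
    {X : Type*} {H : Type*} [NormedAddCommGroup H] [InnerProductSpace ℝ H] [CompleteSpace H]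
    (k : X → H) (n m : ℕ) (x : Fin n → X) (y : Fin n → ℝ)
    (lam : Fin m → ℝ) (hlam : ∀ i, 0 < lam i)
    (z : Fin n → ℝ) (F : Fin m → H)
    (hfeas : ∀ j : Fin n, ∀ i : Fin m, z j = (inner ℝ (F i) (k (x j)) : ℝ))
    (hmin : ∀ (z2 : Fin n → ℝ) (F2 : Fin m → H),
      (∀ j : Fin n, ∀ i : Fin m, z2 j = (inner ℝ (F2 i) (k (x j)) : ℝ)) →
      (∑ j, (z j - y j) ^ 2) + ∑ i, lam i * ‖F i‖ ^ 2
        ≤ (∑ j, (z2 j - y j) ^ 2) + ∑ i, lam i * ‖F2 i‖ ^ 2) :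
    (∀ i i' : Fin m, F i = F i') ∧
    (∀ flam : H,
      (∀ g : H,
        (∑ j, ((inner ℝ flam (k (x j)) : ℝ) - y j) ^ 2 + (∑ i, lam i) * ‖flam‖ ^ 2)
          ≤ ∑ j, ((inner ℝ g (k (x j)) : ℝ) - y j) ^ 2 + (∑ i, lam i) * ‖g‖ ^ 2) →
      ∀ i : Fin m, F i = flam) :=
  fully_coupled_minimizer_components_equal_general k n m x y lam hlam z F hfeas hmin
end

section
/- Given a feasible point v = (z, f_1, ..., f_m) ∈ ℝⁿ × H_K^m, the orthogonal projection (with respect to the weighted inner product ‖z‖² + Σ_k λ_k‖f_k‖²) of v onto the subspace C_i = {(z,f_1,...,f_m) : f_i(x_j) = z_j ∀ j ∈ S̄_i} is given by: f_k^* = f_k for k ≠ i; f_i^* = argmin_{f ∈ H_K} [Σ_{j ∈ S̄_i} (f(x_j) − z_j)² + λ_i‖f − f_i‖²_{H_K}]; z_j^* = z_j for j ∉ S̄_i; and z_j^* = f_i^*(x_j) for j ∈ S̄_i. -/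
/-!
Dropping the nonnegative terms indexed outside `S̄_i` and `k ≠ i` bounds the weighted distance
from `v` to any point of `C_i` below by the local least-squares objective evaluated at its
`i`-th component, hence below by its value at `f_i^*`; and that value is exactly the weighted
distance from `v` to the candidate point, which lies in `C_i` by construction.
-/

open Finset

theorem sum_sq_sub_ite_mem {ι : Type*} [Fintype ι] [DecidableEq ι] (s : Finset ι) (a b : ι → ℝ) :
    ∑ j, ((if j ∈ s then a j else b j) - b j) ^ 2 = ∑ j ∈ s, (a j - b j) ^ 2 := by
  rw [← sum_subset (subset_univ s) fun j _ hj => by simp [hj]]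
  exact sum_congr rfl fun j hj => by simp [hj]

theorem sum_mul_norm_update_sub_sq {ι E : Type*} [Fintype ι] [DecidableEq ι]
    [SeminormedAddCommGroup E] (c : ι → ℝ) (F : ι → E) (i : ι) (f : E) :
    ∑ i₂, c i₂ * ‖Function.update F i f i₂ - F i₂‖ ^ 2 = c i * ‖f - F i‖ ^ 2 := by
  rw [sum_eq_single i (fun i₂ _ hi₂ => by simp [hi₂]) (fun hi => absurd (mem_univ i) hi),
    Function.update_self]

theorem sum_sq_add_mul_norm_sq_le {ι κ E : Type*} [Fintype ι] [Fintype κ]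
    [SeminormedAddCommGroup E] (s : Finset ι) (w z : ι → ℝ) (c : κ → ℝ) (hc : ∀ i, 0 ≤ c i)
    (G F : κ → E) (i : κ) :
    ∑ j ∈ s, (w j - z j) ^ 2 + c i * ‖G i - F i‖ ^ 2
      ≤ ∑ j, (w j - z j) ^ 2 + ∑ i₂, c i₂ * ‖G i₂ - F i₂‖ ^ 2 :=
  add_le_add
    (sum_le_sum_of_subset_of_nonneg (subset_univ s) fun _ _ _ => sq_nonneg _)
    (single_le_sum (f := fun i₂ => c i₂ * ‖G i₂ - F i₂‖ ^ 2)
      (fun i₂ _ => mul_nonneg (hc i₂) (sq_nonneg _)) (mem_univ i))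

theorem projection_onto_Ci_formula_general
    {X : Type*} {H : Type*} [NormedAddCommGroup H] [InnerProductSpace ℝ H]
    (k : X → H) (n m : ℕ) (x : Fin n → X)
    (lam : Fin m → ℝ) (hlam : ∀ i, 0 < lam i)
    (Si : Finset (Fin n)) (i : Fin m)
    (z : Fin n → ℝ) (F : Fin m → H)
    (fstar : H)
    (hfstar : ∀ f : H,
      (∑ j ∈ Si, ((inner ℝ fstar (k (x j)) : ℝ) - z j) ^ 2 + lam i * ‖fstar - F i‖ ^ 2)
        ≤ ∑ j ∈ Si, ((inner ℝ f (k (x j)) : ℝ) - z j) ^ 2 + lam i * ‖f - F i‖ ^ 2)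
    (zstar : Fin n → ℝ) (Fstar : Fin m → H)
    (hzstar : ∀ j : Fin n,
      zstar j = if j ∈ Si then (inner ℝ fstar (k (x j)) : ℝ) else z j)
    (hFstar : ∀ i2 : Fin m, Fstar i2 = if i2 = i then fstar else F i2) :
    (∀ j ∈ Si, (inner ℝ (Fstar i) (k (x j)) : ℝ) = zstar j) ∧
    (∀ (w : Fin n → ℝ) (G : Fin m → H),
      (∀ j ∈ Si, (inner ℝ (G i) (k (x j)) : ℝ) = w j) →
      (∑ j, (zstar j - z j) ^ 2) + ∑ i2, lam i2 * ‖Fstar i2 - F i2‖ ^ 2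
        ≤ (∑ j, (w j - z j) ^ 2) + ∑ i2, lam i2 * ‖G i2 - F i2‖ ^ 2) := by
  obtain rfl : zstar = fun j => if j ∈ Si then inner ℝ fstar (k (x j)) else z j := funext hzstar
  obtain rfl : Fstar = Function.update F i fstar :=
    funext fun i₂ => by rw [hFstar, Function.update_apply]
  refine ⟨fun j hj => by simp [hj], fun w G hG => ?_⟩
  rw [sum_sq_sub_ite_mem, sum_mul_norm_update_sub_sq]
  calc _ ≤ ∑ j ∈ Si, (inner ℝ (G i) (k (x j)) - z j) ^ 2 + lam i * ‖G i - F i‖ ^ 2 :=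
        hfstar (G i)
    _ = ∑ j ∈ Si, (w j - z j) ^ 2 + lam i * ‖G i - F i‖ ^ 2 := by
        rw [sum_congr rfl fun j hj => by rw [hG j hj]]
    _ ≤ _ := sum_sq_add_mul_norm_sq_le Si w z lam (fun i₂ => (hlam i₂).le) G F i

/-- Closed form of the orthogonal projection (in the weighted norm
`‖z‖² + Σ_k λ_k ‖f_k‖²`) of a point `(z, f_1, …, f_m)` onto the subspace
`C_i = {(z, f_1, …, f_m) : f_i(x_j) = z_j ∀ j ∈ S̄_i}`: only the `i`-th function and the
coordinates in `S̄_i` change, via a local regularized least-squares fit.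
(RKHS modeled abstractly: `f(x) = ⟪f, k x⟫`.) -/
theorem projection_onto_Ci_formula
    {X : Type*} {H : Type*} [NormedAddCommGroup H] [InnerProductSpace ℝ H] [CompleteSpace H]
    (k : X → H) (n m : ℕ) (x : Fin n → X)
    (lam : Fin m → ℝ) (hlam : ∀ i, 0 < lam i)
    (Si : Finset (Fin n)) (i : Fin m)
    (z : Fin n → ℝ) (F : Fin m → H)
    (fstar : H)
    (hfstar : ∀ f : H,
      (∑ j ∈ Si, ((inner ℝ fstar (k (x j)) : ℝ) - z j) ^ 2 + lam i * ‖fstar - F i‖ ^ 2)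
        ≤ ∑ j ∈ Si, ((inner ℝ f (k (x j)) : ℝ) - z j) ^ 2 + lam i * ‖f - F i‖ ^ 2)
    (zstar : Fin n → ℝ) (Fstar : Fin m → H)
    (hzstar : ∀ j : Fin n,
      zstar j = if j ∈ Si then (inner ℝ fstar (k (x j)) : ℝ) else z j)
    (hFstar : ∀ i2 : Fin m, Fstar i2 = if i2 = i then fstar else F i2) :
    (∀ j ∈ Si, (inner ℝ (Fstar i) (k (x j)) : ℝ) = zstar j) ∧
    (∀ (w : Fin n → ℝ) (G : Fin m → H),
      (∀ j ∈ Si, (inner ℝ (G i) (k (x j)) : ℝ) = w j) →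
      (∑ j, (zstar j - z j) ^ 2) + ∑ i2, lam i2 * ‖Fstar i2 - F i2‖ ^ 2
        ≤ (∑ j, (w j - z j) ^ 2) + ∑ i2, lam i2 * ‖G i2 - F i2‖ ^ 2) :=
  projection_onto_Ci_formula_general k n m x lam hlam Si i z F fstar hfstar zstar Fstar hzstar
    hFstar
end

section
/- (Theorem 4, local representer property) Let (z, f_{λ_1},...,f_{λ_m}) be the solution of the relaxed program minimizing ‖z − y‖² + Σ_i λ_i‖f_i‖²_{H_K} subject to z_j = f_i(x_j) for all j ∈ S̄_i and each i. Then for every agent i there exist coefficients c ∈ ℝ^{|S̄_i|} such that f_{λ_i} = Σ_{j ∈ S̄_i} c_j K(·, x_j); i.e., each agent's optimal function lies in the span of the kernel sections of its locally accessible data only. -/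
/-!
Replacing agent `i`'s function by its orthogonal projection onto the span of the kernel sections
`k (x j)`, `j ∈ Si i`, keeps every constraint `z j = ⟪F i, k (x j)⟫` with `j ∈ Si i` (the
projection is self-adjoint and fixes these sections) and leaves all other agents untouched, so
the competitor is feasible. By Pythagoras it does not increase `‖F i‖`, with equality only when
`F i` already lies in that span; since `lam i > 0`, minimality forces equality.
-/

open Function Finset

section Projection

variable {𝕜 E : Type*} [RCLike 𝕜] [NormedAddCommGroup E] [InnerProductSpace 𝕜 E]
  (K : Submodule 𝕜 E) [K.HasOrthogonalProjection]

theorem Submodule.inner_starProjection_left_of_mem {v : E} (hv : v ∈ K) (u : E) :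
    inner 𝕜 (K.starProjection u) v = inner 𝕜 u v := by
  rw [K.inner_starProjection_left_eq_right, K.starProjection_eq_self_iff.mpr hv]

theorem Submodule.mem_of_norm_sq_le_norm_starProjection_sq {u : E}
    (h : ‖u‖ ^ 2 ≤ ‖K.starProjection u‖ ^ 2) : u ∈ K :=
  (K.mem_iff_norm_starProjection u).mpr <| le_antisymm (K.norm_starProjection_apply_le u) <|
    (pow_le_pow_iff_left₀ (norm_nonneg _) (norm_nonneg _) two_ne_zero).mp h

end Projection

theorem Finset.sum_apply_update {ι β R : Type*} [Fintype ι] [DecidableEq ι] [AddCommGroup R]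
    (g : ι → β → R) (F : ι → β) (i : ι) (b : β) :
    ∑ j, g j (update F i b j) = ∑ j, g j (F j) + (g i b - g i (F i)) := by
  rw [← add_sum_erase _ _ (mem_univ i), ← add_sum_erase _ _ (mem_univ i), update_self,
    sum_congr rfl fun j hj => by rw [update_of_ne (ne_of_mem_erase hj)]]
  abel

section RelaxedProgram

variable {X H ι J : Type*} [NormedAddCommGroup H] [InnerProductSpace ℝ H]

def RelaxedFeasible (k : X → H) (x : J → X) (S : ι → Finset J) (z : J → ℝ) (F : ι → H) :
    Prop :=
  ∀ i, ∀ j ∈ S i, z j = inner ℝ (F i) (k (x j))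

theorem RelaxedFeasible.update [DecidableEq ι] {k : X → H} {x : J → X} {S : ι → Finset J}
    {z : J → ℝ} {F : ι → H} (hF : RelaxedFeasible k x S z F) {i : ι} {G : H}
    (hG : ∀ j ∈ S i, inner ℝ G (k (x j)) = inner ℝ (F i) (k (x j))) :
    RelaxedFeasible k x S z (Function.update F i G) := by
  intro i' j hj
  rcases eq_or_ne i' i with rfl | hne
  · rw [update_self, hG j hj, hF i' j hj]
  · rw [update_of_ne hne, hF i' j hj]

theorem RelaxedFeasible.norm_sq_le_of_isMinimizer [Fintype ι] {k : X → H} {x : J → X}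
    {S : ι → Finset J} {L : (J → ℝ) → ℝ} {lam : ι → ℝ} {z : J → ℝ} {F : ι → H}
    (hF : RelaxedFeasible k x S z F)
    (hmin : ∀ z' F', RelaxedFeasible k x S z' F' →
      L z + ∑ i, lam i * ‖F i‖ ^ 2 ≤ L z' + ∑ i, lam i * ‖F' i‖ ^ 2)
    {i : ι} (hlam : 0 < lam i) {G : H}
    (hG : ∀ j ∈ S i, inner ℝ G (k (x j)) = inner ℝ (F i) (k (x j))) :
    ‖F i‖ ^ 2 ≤ ‖G‖ ^ 2 := by
  classical
  have h := hmin z _ (hF.update hG)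
  rw [sum_apply_update (fun j v => lam j * ‖v‖ ^ 2)] at h
  nlinarith

end RelaxedProgram

theorem local_representer_property_general
    {X : Type*} {H : Type*} [NormedAddCommGroup H] [InnerProductSpace ℝ H]
    (k : X → H) (n m : ℕ) (x : Fin n → X) (y : Fin n → ℝ)
    (lam : Fin m → ℝ) (hlam : ∀ i, 0 < lam i)
    (Si : Fin m → Finset (Fin n))
    (z : Fin n → ℝ) (F : Fin m → H)
    (hfeas : ∀ i : Fin m, ∀ j ∈ Si i, z j = (inner ℝ (F i) (k (x j)) : ℝ))
    (hmin : ∀ (z2 : Fin n → ℝ) (F2 : Fin m → H),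
      (∀ i : Fin m, ∀ j ∈ Si i, z2 j = (inner ℝ (F2 i) (k (x j)) : ℝ)) →
      (∑ j, (z j - y j) ^ 2) + ∑ i, lam i * ‖F i‖ ^ 2
        ≤ (∑ j, (z2 j - y j) ^ 2) + ∑ i, lam i * ‖F2 i‖ ^ 2) :
    ∀ i : Fin m, ∃ c : Fin n → ℝ, F i = ∑ j ∈ Si i, c j • k (x j) := by
  intro i
  let V := Submodule.span ℝ ((k ∘ x) '' (Si i : Set (Fin n)))
  have : FiniteDimensional ℝ V :=
    FiniteDimensional.span_of_finite ℝ ((Si i).finite_toSet.image _)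
  have hsection : ∀ j ∈ Si i, k (x j) ∈ V := fun j hj =>
    Submodule.subset_span (Set.mem_image_of_mem _ hj)
  have hproj : ‖F i‖ ^ 2 ≤ ‖V.starProjection (F i)‖ ^ 2 :=
    RelaxedFeasible.norm_sq_le_of_isMinimizer (L := fun z => ∑ j, (z j - y j) ^ 2) hfeas hmin
      (hlam i) fun j hj => V.inner_starProjection_left_of_mem (hsection j hj) (F i)
  obtain ⟨c, hc⟩ := (Submodule.mem_span_image_finset_iff_exists_fun' ℝ).mp
    (V.mem_of_norm_sq_le_norm_starProjection_sq hproj)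
  exact ⟨c, hc.symm⟩

/-- Theorem 4 (local representer property): in the relaxed program, each agent's optimal
function lies in the span of the kernel sections of its locally accessible data.
(RKHS modeled abstractly: `k x` is the kernel section `K(·,x)` and `f(x) = ⟪f, k x⟫`.) -/
theorem local_representer_property
    {X : Type*} {H : Type*} [NormedAddCommGroup H] [InnerProductSpace ℝ H] [CompleteSpace H]
    (k : X → H) (n m : ℕ) (x : Fin n → X) (y : Fin n → ℝ)
    (lam : Fin m → ℝ) (hlam : ∀ i, 0 < lam i)
    (Si : Fin m → Finset (Fin n))
    (z : Fin n → ℝ) (F : Fin m → H)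
    (hfeas : ∀ i : Fin m, ∀ j ∈ Si i, z j = (inner ℝ (F i) (k (x j)) : ℝ))
    (hmin : ∀ (z2 : Fin n → ℝ) (F2 : Fin m → H),
      (∀ i : Fin m, ∀ j ∈ Si i, z2 j = (inner ℝ (F2 i) (k (x j)) : ℝ)) →
      (∑ j, (z j - y j) ^ 2) + ∑ i, lam i * ‖F i‖ ^ 2
        ≤ (∑ j, (z2 j - y j) ^ 2) + ∑ i, lam i * ‖F2 i‖ ^ 2) :
    ∀ i : Fin m, ∃ c : Fin n → ℝ, F i = ∑ j ∈ Si i, c j • k (x j) :=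
  local_representer_property_general k n m x y lam hlam Si z F hfeas hmin
end

section
/- (Theorem 3, convergence of the collaborative algorithm) Let (z, f_{λ_1},...,f_{λ_m}) be the solution of the relaxed program minimizing ‖z − y‖² + Σ_i λ_i‖f_i‖²_{H_K} subject to z_j = f_i(x_j) for j ∈ S̄_i. Let the algorithm generate iterates by cyclically, for i = 1,...,m, setting f_{i,t} = argmin_{f ∈ H_K}[Σ_{j∈S̄_i}(f(x_j) − z_j)² + λ_i‖f − f_{i,t−1}‖²] and updating z_j ← f_{i,t}(x_j) for j ∈ S̄_i, starting from f_{i,0} = 0 and z = y. Then lim_{T→∞} f_{i,T} = f_{λ_i} in H_K norm for every i. -/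
/-!
After rescaling the `i`-th function by `√λᵢ`, the relaxed objective is the squared distance
from `(y, 0)` in the Hilbert space `ℝⁿ × Hᵐ` with its ℓ² norm, and the constraints of agent `i`
cut out the orthogonal complement `Cᵢ` of finitely many vectors. A local fit of agent `i` is
then exactly the orthogonal projection onto `Cᵢ`, and the solution of the relaxed program is the
projection of `(y, 0)` onto `⋂ Cᵢ`, so the theorem is an instance of the convergence of cyclic
projections. Since the `Cᵢ` have finite codimension, the iterates stay in a finite-dimensional
affine subspace and compactness suffices: projections decrease the distance to every point of
`⋂ Cᵢ`, the squared step lengths are summable, hence a cluster point of the iterates at the ends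
of the cycles is fixed by every projection, and it differs from `(y, 0)` by a vector orthogonal
to `⋂ Cᵢ`.
-/

open Filter Topology

theorem tendsto_comp_add_of_tendsto_sub_succ {G : Type*} [AddCommGroup G] [TopologicalSpace G]
    [IsTopologicalAddGroup G] {w : ℕ → G} {ψ : ℕ → ℕ} {a : G}
    (hw : Tendsto (fun s => w s - w (s + 1)) atTop (𝓝 0)) (hψ : Tendsto ψ atTop atTop)
    (ha : Tendsto (fun T => w (ψ T)) atTop (𝓝 a)) (r : ℕ) :
    Tendsto (fun T => w (ψ T + r)) atTop (𝓝 a) := by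
  induction r with
  | zero => exact ha
  | succ r ih =>
    simpa [← add_assoc] using
      ih.sub (hw.comp (tendsto_atTop_mono (fun T => Nat.le_add_right _ r) hψ))

section InnerProductSpace

variable {E : Type*} [NormedAddCommGroup E] [InnerProductSpace ℝ E]

namespace Submodule

theorem eq_starProjection_of_forall_norm_sub_le {K : Submodule ℝ E} [K.HasOrthogonalProjection]
    {u v : E} (hv : v ∈ K) (hmin : ∀ w ∈ K, ‖u - v‖ ≤ ‖u - w‖) : K.starProjection u = v := by
  refine eq_starProjection_of_mem_of_inner_eq_zero hv
    ((K.norm_eq_iInf_iff_real_inner_eq_zero hv).1 ?_)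
  exact le_antisymm (le_ciInf fun w => hmin w w.2)
    (ciInf_le ⟨0, Set.forall_mem_range.2 fun _ => norm_nonneg _⟩ (⟨v, hv⟩ : K))

theorem norm_sub_sq_eq_norm_starProjection_sub_sq_add (K : Submodule ℝ E)
    [K.HasOrthogonalProjection] (u : E) {p : E} (hp : p ∈ K) :
    ‖u - p‖ ^ 2 = ‖K.starProjection u - p‖ ^ 2 + ‖u - K.starProjection u‖ ^ 2 := by
  have h : inner ℝ (u - K.starProjection u) (K.starProjection u - p) = 0 :=
    K.inner_left_of_mem_orthogonal (K.sub_mem (K.starProjection_apply_mem u) hp)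
      (K.sub_starProjection_mem_orthogonal u)
  rw [← sub_add_sub_cancel' (K.starProjection u), add_comm, norm_add_sq_real, h]
  ring

end Submodule

section IteratedProjection

variable {C : ℕ → Submodule ℝ E} [∀ s, (C s).HasOrthogonalProjection] {w : ℕ → E}

theorem norm_sub_sq_eq_of_starProjection_succ
    (hw : ∀ s, w (s + 1) = (C s).starProjection (w s)) {s : ℕ} {p : E} (hp : p ∈ C s) :
    ‖w s - p‖ ^ 2 = ‖w (s + 1) - p‖ ^ 2 + ‖w s - w (s + 1)‖ ^ 2 := by
  rw [hw]
  exact (C s).norm_sub_sq_eq_norm_starProjection_sub_sq_add (w s) hp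

theorem antitone_norm_sub_of_starProjection_succ
    (hw : ∀ s, w (s + 1) = (C s).starProjection (w s)) {p : E} (hp : ∀ s, p ∈ C s) :
    Antitone fun s => ‖w s - p‖ := by
  refine antitone_nat_of_succ_le fun s => ?_
  have h := norm_sub_sq_eq_of_starProjection_succ hw (hp s)
  exact (pow_le_pow_iff_left₀ (norm_nonneg _) (norm_nonneg _) two_ne_zero).1
    (by linarith [sq_nonneg ‖w s - w (s + 1)‖])

theorem tendsto_sub_succ_of_starProjection_succ
    (hw : ∀ s, w (s + 1) = (C s).starProjection (w s)) :
    Tendsto (fun s => w s - w (s + 1)) atTop (𝓝 0) := by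
  have htel : ∀ S, ∑ s ∈ Finset.range S, ‖w s - w (s + 1)‖ ^ 2 + ‖w S‖ ^ 2 = ‖w 0‖ ^ 2 := by
    intro S
    induction S with
    | zero => simp
    | succ S ih =>
      have h := norm_sub_sq_eq_of_starProjection_succ hw (C S).zero_mem
      simp only [sub_zero] at h
      rw [Finset.sum_range_succ]
      linarith
  have hsum : Summable fun s => ‖w s - w (s + 1)‖ ^ 2 :=
    summable_of_sum_range_le (c := ‖w 0‖ ^ 2) (fun _ => by positivity) fun S => by
      linarith [htel S, sq_nonneg ‖w S‖]
  rw [tendsto_zero_iff_norm_tendsto_zero]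
  simpa using hsum.tendsto_atTop_zero.sqrt

end IteratedProjection

theorem sub_mem_iSup_of_starProjection_orthogonal_succ {ι : Type*} (K : ι → Submodule ℝ E)
    [∀ i, (K i).HasOrthogonalProjection] {σ : ℕ → ι} {w : ℕ → E}
    (hw : ∀ s, w (s + 1) = (K (σ s))ᗮ.starProjection (w s)) (s : ℕ) :
    w 0 - w s ∈ ⨆ i, K i := by
  induction s with
  | zero => simp
  | succ s ih =>
    have hstep : w s - w (s + 1) ∈ ⨆ i, K i := by
      rw [hw, Submodule.starProjection_orthogonal_val, sub_sub_cancel]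
      exact Submodule.mem_iSup_of_mem _ (Submodule.starProjection_apply_mem _ _)
    simpa using Submodule.add_mem _ ih hstep

section Cyclic

variable {m : ℕ} (hm : 0 < m) (K : Fin m → Submodule ℝ E) [∀ i, (K i).HasOrthogonalProjection]
  {w : ℕ → E}

theorem mem_orthogonal_of_tendsto_cyclic_starProjection
    (hw : ∀ s, w (s + 1) = (K ⟨s % m, Nat.mod_lt s hm⟩)ᗮ.starProjection (w s))
    {ψ : ℕ → ℕ} (hψ : Tendsto (fun T => ψ T * m) atTop atTop) {a : E}
    (ha : Tendsto (fun T => w (ψ T * m)) atTop (𝓝 a)) (i : Fin m) : a ∈ (K i)ᗮ := by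
  have hshift := tendsto_comp_add_of_tendsto_sub_succ
    (tendsto_sub_succ_of_starProjection_succ hw) hψ ha
  have hidx : ∀ T, w (ψ T * m + (i + 1)) = (K i)ᗮ.starProjection (w (ψ T * m + i)) := by
    intro T
    have hmod : (⟨(ψ T * m + i) % m, Nat.mod_lt _ hm⟩ : Fin m) = i :=
      Fin.ext (by simp [Nat.mod_eq_of_lt i.isLt])
    rw [← add_assoc, hw, hmod]
  rw [← Submodule.starProjection_eq_self_iff]
  exact tendsto_nhds_unique (((K i)ᗮ.starProjection.continuous.tendsto a).comp (hshift i))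
    ((hshift (i + 1)).congr hidx)

theorem tendsto_cyclic_starProjection_orthogonal [∀ i, FiniteDimensional ℝ (K i)]
    (hw : ∀ s, w (s + 1) = (K ⟨s % m, Nat.mod_lt s hm⟩)ᗮ.starProjection (w s)) :
    Tendsto w atTop (𝓝 ((⨆ i, K i)ᗮ.starProjection (w 0))) := by
  set W : Submodule ℝ E := ⨆ i, K i
  have hW := sub_mem_iSup_of_starProjection_orthogonal_succ K hw
  have hle : ∀ s, ‖w s‖ ≤ ‖w 0‖ := fun s => by
    simpa using antitone_norm_sub_of_starProjection_succ hw (p := 0)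
      (fun _ => Submodule.zero_mem _) (Nat.zero_le s)
  obtain ⟨b, -, φ, hφ, hb⟩ := tendsto_subseq_of_bounded
    (x := fun T => (⟨w 0 - w (T * m), hW _⟩ : W))
    (Metric.isBounded_closedBall (x := 0) (r := 2 * ‖w 0‖)) fun T => by
      simp only [Metric.mem_closedBall, dist_zero_right, Submodule.coe_norm]
      linarith [norm_sub_le (w 0) (w (T * m)), hle (T * m)]
  set a := w 0 - b
  have hψ : Tendsto (fun T => φ T * m) atTop atTop :=
    hφ.tendsto_atTop.atTop_mul_one_le fun _ => hm
  have ha : Tendsto (fun T => w (φ T * m)) atTop (𝓝 a) := by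
    simpa [a] using
      (tendsto_const_nhds (x := w 0)).sub ((continuous_subtype_val.tendsto b).comp hb)
  have haK := mem_orthogonal_of_tendsto_cyclic_starProjection hm K hw hψ ha
  have ha_eq : Wᗮ.starProjection (w 0) = a := by
    refine Submodule.eq_starProjection_of_mem_orthogonal ?_ (W.le_orthogonal_orthogonal ?_)
    · rw [← Submodule.iInf_orthogonal]
      exact Submodule.mem_iInf _ |>.2 haK
    · simp [a]
  rw [ha_eq, tendsto_iff_norm_sub_tendsto_zero,
    tendsto_iff_tendsto_subseq_of_antitone
      (antitone_norm_sub_of_starProjection_succ hw fun _ => haK _) hψ]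
  exact tendsto_iff_norm_sub_tendsto_zero.1 ha

end Cyclic

end InnerProductSpace

/-- A type synonym rather than an `abbrev`: instance search on submodules of the nested `WithLp`
type times out. -/
def L2Prod (n m : ℕ) (H : Type*) : Type _ :=
  WithLp 2 (EuclideanSpace ℝ (Fin n) × PiLp 2 fun _ : Fin m => H)

section WeightedEmbedding

variable {H : Type*} [NormedAddCommGroup H] [InnerProductSpace ℝ H] {n m : ℕ}

noncomputable instance : NormedAddCommGroup (L2Prod n m H) :=
  inferInstanceAs (NormedAddCommGroup (WithLp 2 _))

noncomputable instance : InnerProductSpace ℝ (L2Prod n m H) :=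
  inferInstanceAs (InnerProductSpace ℝ (WithLp 2 _))

noncomputable def L2Prod.equiv :
    L2Prod n m H ≃ₗᵢ[ℝ] WithLp 2 (EuclideanSpace ℝ (Fin n) × PiLp 2 fun _ : Fin m => H) :=
  LinearIsometryEquiv.refl ℝ _

noncomputable def weightedEmbedding (lam : Fin m → ℝ) (z : Fin n → ℝ) (F : Fin m → H) :
    L2Prod n m H :=
  L2Prod.equiv.symm (WithLp.toLp 2 (WithLp.toLp 2 z, WithLp.toLp 2 fun i => √(lam i) • F i))

variable {lam : Fin m → ℝ}

theorem weightedEmbedding_sub (z z' : Fin n → ℝ) (F F' : Fin m → H) :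
    weightedEmbedding lam (z - z') (F - F') =
      weightedEmbedding lam z F - weightedEmbedding lam z' F' := by
  simp only [weightedEmbedding, ← map_sub, Pi.sub_apply, smul_sub]
  rfl

theorem norm_weightedEmbedding_sq (hlam : ∀ i, 0 ≤ lam i) (z : Fin n → ℝ) (F : Fin m → H) :
    ‖weightedEmbedding lam z F‖ ^ 2 = ∑ j, z j ^ 2 + ∑ i, lam i * ‖F i‖ ^ 2 := by
  simp [weightedEmbedding, WithLp.prod_norm_sq_eq_of_L2, EuclideanSpace.norm_sq_eq,
    PiLp.norm_sq_eq_of_L2, norm_smul, mul_pow, Real.sq_sqrt (hlam _)]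

theorem exists_weightedEmbedding_eq (hlam : ∀ i, 0 < lam i) (e : L2Prod n m H) :
    ∃ z F, weightedEmbedding lam z F = e := by
  refine ⟨(L2Prod.equiv e).fst, fun i => (√(lam i))⁻¹ • (L2Prod.equiv e).snd i, ?_⟩
  simp [weightedEmbedding, smul_smul, mul_inv_cancel₀ (Real.sqrt_pos.2 (hlam _)).ne']
  rfl

theorem tendsto_apply_of_tendsto_weightedEmbedding {α : Type*} {l : Filter α} {i : Fin m}
    (hlam : 0 < lam i) {z : α → Fin n → ℝ} {F : α → Fin m → H} {z₀ : Fin n → ℝ} {F₀ : Fin m → H}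
    (h : Tendsto (fun t => weightedEmbedding lam (z t) (F t)) l
      (𝓝 (weightedEmbedding lam z₀ F₀))) :
    Tendsto (fun t => F t i) l (𝓝 (F₀ i)) := by
  have hc : Continuous fun e : L2Prod n m H => (√(lam i))⁻¹ • (L2Prod.equiv e).snd i := by
    fun_prop
  simpa [Function.comp_def, weightedEmbedding, smul_smul,
    inv_mul_cancel₀ (Real.sqrt_pos.2 hlam).ne'] using (hc.tendsto _).comp h

noncomputable def constraintVector (lam : Fin m → ℝ) (v : Fin n → H) (i : Fin m) (j : Fin n) :
    L2Prod n m H :=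
  L2Prod.equiv.symm (WithLp.toLp 2
    (EuclideanSpace.single j 1, WithLp.toLp 2 (Pi.single i (-(√(lam i))⁻¹ • v j))))

theorem inner_constraintVector_weightedEmbedding {v : Fin n → H} {i : Fin m} (hlam : 0 < lam i)
    (j : Fin n) (z : Fin n → ℝ) (F : Fin m → H) :
    inner ℝ (constraintVector lam v i j) (weightedEmbedding lam z F) =
      z j - inner ℝ (F i) (v j) := by
  have hsqrt : √(lam i) ≠ 0 := (Real.sqrt_pos.2 hlam).ne'
  simp [constraintVector, weightedEmbedding, PiLp.inner_apply, apply_ite,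
    inner_smul_right, real_inner_comm, hsqrt, sub_eq_add_neg]

noncomputable def constraintSpace (lam : Fin m → ℝ) (v : Fin n → H) (S : Fin m → Finset (Fin n))
    (i : Fin m) : Submodule ℝ (L2Prod n m H) :=
  Submodule.span ℝ (constraintVector lam v i '' S i)

instance (lam : Fin m → ℝ) (v : Fin n → H) (S : Fin m → Finset (Fin n)) (i : Fin m) :
    FiniteDimensional ℝ (constraintSpace lam v S i) :=
  FiniteDimensional.span_of_finite ℝ ((S i).finite_toSet.image _)

theorem weightedEmbedding_mem_orthogonal_constraintSpace_iff {v : Fin n → H}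
    {S : Fin m → Finset (Fin n)} {i : Fin m} (hlam : 0 < lam i) (z : Fin n → ℝ) (F : Fin m → H) :
    weightedEmbedding lam z F ∈ (constraintSpace lam v S i)ᗮ ↔
      ∀ j ∈ S i, z j = inner ℝ (F i) (v j) := by
  rw [constraintSpace, ← Submodule.span_singleton_le_iff_mem, ← Submodule.isOrtho_iff_le,
    Submodule.isOrtho_comm, Submodule.isOrtho_span]
  simp only [Set.mem_image, Finset.mem_coe, Set.mem_singleton_iff, forall_eq,
    forall_exists_index, and_imp, forall_apply_eq_imp_iff₂,
    inner_constraintVector_weightedEmbedding hlam, sub_eq_zero]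

theorem starProjection_weightedEmbedding_eq_of_localFit (hlam : ∀ i, 0 < lam i)
    {v : Fin n → H} {S : Fin m → Finset (Fin n)} {i : Fin m} {z z' : Fin n → ℝ}
    {F F' : Fin m → H}
    (hfit : ∀ f : H, ∑ j ∈ S i, (inner ℝ (F' i) (v j) - z j) ^ 2 + lam i * ‖F' i - F i‖ ^ 2 ≤
      ∑ j ∈ S i, (inner ℝ f (v j) - z j) ^ 2 + lam i * ‖f - F i‖ ^ 2)
    (hF' : ∀ i₂, i₂ ≠ i → F' i₂ = F i₂)
    (hz' : ∀ j, z' j = if j ∈ S i then inner ℝ (F' i) (v j) else z j) :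
    (constraintSpace lam v S i)ᗮ.starProjection (weightedEmbedding lam z F) =
      weightedEmbedding lam z' F' := by
  have hlam₀ : ∀ i, 0 ≤ lam i := fun i => (hlam i).le
  refine Submodule.eq_starProjection_of_forall_norm_sub_le
    ((weightedEmbedding_mem_orthogonal_constraintSpace_iff (hlam i) _ _).2
      fun j hj => by simp [hz', hj]) ?_
  intro e he
  obtain ⟨z₂, F₂, rfl⟩ := exists_weightedEmbedding_eq hlam e
  rw [weightedEmbedding_mem_orthogonal_constraintSpace_iff (hlam i)] at he
  rw [← pow_le_pow_iff_left₀ (norm_nonneg _) (norm_nonneg _) two_ne_zero,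
    ← weightedEmbedding_sub, ← weightedEmbedding_sub, norm_weightedEmbedding_sq hlam₀,
    norm_weightedEmbedding_sq hlam₀]
  calc ∑ j, (z - z') j ^ 2 + ∑ i, lam i * ‖(F - F') i‖ ^ 2
      = ∑ j ∈ S i, (inner ℝ (F' i) (v j) - z j) ^ 2 + lam i * ‖F' i - F i‖ ^ 2 := by
        congr 1
        · rw [← Finset.sum_subset (Finset.subset_univ (S i)) fun j _ hj => by simp [hz', hj]]
          exact Finset.sum_congr rfl fun j hj => by simp [hz', hj, sub_sq_comm]
        · rw [Finset.sum_eq_single i (fun i₂ _ hi₂ => by simp [hF' i₂ hi₂]) (by simp)]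
          simp [norm_sub_rev]
    _ ≤ ∑ j ∈ S i, (inner ℝ (F₂ i) (v j) - z j) ^ 2 + lam i * ‖F₂ i - F i‖ ^ 2 := hfit _
    _ ≤ ∑ j, (z - z₂) j ^ 2 + ∑ i, lam i * ‖(F - F₂) i‖ ^ 2 := by
        gcongr
        · calc ∑ j ∈ S i, (inner ℝ (F₂ i) (v j) - z j) ^ 2 = ∑ j ∈ S i, (z - z₂) j ^ 2 :=
                Finset.sum_congr rfl fun j hj => by simp [← he j hj, sub_sq_comm]
            _ ≤ ∑ j, (z - z₂) j ^ 2 := Finset.sum_le_sum_of_subset_of_nonneg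
                (Finset.subset_univ _) fun j _ _ => sq_nonneg _
        · rw [norm_sub_rev]
          exact Finset.single_le_sum (f := fun i => lam i * ‖(F - F₂) i‖ ^ 2)
            (fun i _ => mul_nonneg (hlam₀ i) (sq_nonneg _)) (Finset.mem_univ i)

theorem starProjection_weightedEmbedding_eq_of_minimizes (hlam : ∀ i, 0 < lam i)
    {v : Fin n → H} {S : Fin m → Finset (Fin n)} {y z : Fin n → ℝ} {F : Fin m → H}
    (hfeas : ∀ i, ∀ j ∈ S i, z j = inner ℝ (F i) (v j))
    (hmin : ∀ (z₂ : Fin n → ℝ) (F₂ : Fin m → H), (∀ i, ∀ j ∈ S i, z₂ j = inner ℝ (F₂ i) (v j)) →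
      ∑ j, (z j - y j) ^ 2 + ∑ i, lam i * ‖F i‖ ^ 2 ≤
        ∑ j, (z₂ j - y j) ^ 2 + ∑ i, lam i * ‖F₂ i‖ ^ 2) :
    (⨆ i, constraintSpace lam v S i)ᗮ.starProjection (weightedEmbedding lam y 0) =
      weightedEmbedding lam z F := by
  have hlam₀ : ∀ i, 0 ≤ lam i := fun i => (hlam i).le
  have hmem : ∀ z₂ F₂, weightedEmbedding lam z₂ F₂ ∈ (⨆ i, constraintSpace lam v S i)ᗮ ↔
      ∀ i, ∀ j ∈ S i, z₂ j = inner ℝ (F₂ i) (v j) := fun z₂ F₂ => by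
    simp only [← Submodule.iInf_orthogonal, Submodule.mem_iInf,
      weightedEmbedding_mem_orthogonal_constraintSpace_iff (hlam _)]
  refine Submodule.eq_starProjection_of_forall_norm_sub_le ((hmem z F).2 hfeas) fun e he => ?_
  obtain ⟨z₂, F₂, rfl⟩ := exists_weightedEmbedding_eq hlam e
  rw [← pow_le_pow_iff_left₀ (norm_nonneg _) (norm_nonneg _) two_ne_zero,
    ← weightedEmbedding_sub, ← weightedEmbedding_sub, norm_weightedEmbedding_sq hlam₀,
    norm_weightedEmbedding_sq hlam₀]
  simpa [sub_sq_comm (y _)] using hmin z₂ F₂ ((hmem z₂ F₂).1 he)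

end WeightedEmbedding

/-- The RKHS is modelled through its reproducing property `f x = ⟪f, k x⟫`. -/
theorem collaborative_algorithm_converges_general
    {X : Type*} {H : Type*} [NormedAddCommGroup H] [InnerProductSpace ℝ H]
    (k : X → H) (n m : ℕ) (hm : 0 < m) (x : Fin n → X) (y : Fin n → ℝ)
    (lam : Fin m → ℝ) (hlam : ∀ i, 0 < lam i)
    (Si : Fin m → Finset (Fin n))
    -- the solution of the relaxed program
    (zopt : Fin n → ℝ) (Fopt : Fin m → H)
    (hfeas : ∀ i : Fin m, ∀ j ∈ Si i, zopt j = (inner ℝ (Fopt i) (k (x j)) : ℝ))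
    (hmin : ∀ (z2 : Fin n → ℝ) (F2 : Fin m → H),
      (∀ i : Fin m, ∀ j ∈ Si i, z2 j = (inner ℝ (F2 i) (k (x j)) : ℝ)) →
      (∑ j, (zopt j - y j) ^ 2) + ∑ i, lam i * ‖Fopt i‖ ^ 2
        ≤ (∑ j, (z2 j - y j) ^ 2) + ∑ i, lam i * ‖F2 i‖ ^ 2)
    -- the algorithm iterates: `Z s` are the message variables and `F s` the agents'
    -- functions after `s` global steps
    (Z : ℕ → Fin n → ℝ) (F : ℕ → Fin m → H)
    (hZ0 : Z 0 = y) (hF0 : F 0 = 0)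
    (hstep : ∀ s : ℕ, ∀ i : Fin m, i = ⟨s % m, Nat.mod_lt s hm⟩ →
      (∀ f : H,
        (∑ j ∈ Si i, ((inner ℝ (F (s + 1) i) (k (x j)) : ℝ) - Z s j) ^ 2
            + lam i * ‖F (s + 1) i - F s i‖ ^ 2)
          ≤ ∑ j ∈ Si i, ((inner ℝ f (k (x j)) : ℝ) - Z s j) ^ 2
            + lam i * ‖f - F s i‖ ^ 2) ∧
      (∀ i2 : Fin m, i2 ≠ i → F (s + 1) i2 = F s i2) ∧
      (∀ j : Fin n,
        Z (s + 1) j = if j ∈ Si i then (inner ℝ (F (s + 1) i) (k (x j)) : ℝ) else Z s j)) :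
    ∀ i : Fin m, Tendsto (fun T : ℕ => F (T * m) i) atTop (nhds (Fopt i)) := by
  intro i
  have hw := tendsto_cyclic_starProjection_orthogonal hm
    (constraintSpace lam (fun j => k (x j)) Si) (w := fun s => weightedEmbedding lam (Z s) (F s))
    fun s =>
      let ⟨hfit, hF, hZ⟩ := hstep s _ rfl
      (starProjection_weightedEmbedding_eq_of_localFit hlam hfit hF hZ).symm
  rw [hZ0, hF0, starProjection_weightedEmbedding_eq_of_minimizes hlam hfeas hmin] at hw
  exact tendsto_apply_of_tendsto_weightedEmbedding (hlam i)
    (hw.comp (tendsto_id.atTop_mul_one_le fun _ => hm))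

/-- Theorem 3: convergence of the collaborative training algorithm.  The algorithm cycles
over the agents; at global step `s`, agent `i = s % m` computes a local regularized fit to
the current message variables `Z s` (regularizing toward its previous function) and
updates the message variables on its local indices.  Then for every agent `i`, the iterate
after `T` full cycles converges in norm to the `i`-th component of the solution of the
relaxed program.  (RKHS modeled abstractly: `f(x) = ⟪f, k x⟫`.) -/
theorem collaborative_algorithm_converges
    {X : Type*} {H : Type*} [NormedAddCommGroup H] [InnerProductSpace ℝ H] [CompleteSpace H]
    (k : X → H) (n m : ℕ) (hm : 0 < m) (x : Fin n → X) (y : Fin n → ℝ)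
    (lam : Fin m → ℝ) (hlam : ∀ i, 0 < lam i)
    (Si : Fin m → Finset (Fin n))
    -- the solution of the relaxed program
    (zopt : Fin n → ℝ) (Fopt : Fin m → H)
    (hfeas : ∀ i : Fin m, ∀ j ∈ Si i, zopt j = (inner ℝ (Fopt i) (k (x j)) : ℝ))
    (hmin : ∀ (z2 : Fin n → ℝ) (F2 : Fin m → H),
      (∀ i : Fin m, ∀ j ∈ Si i, z2 j = (inner ℝ (F2 i) (k (x j)) : ℝ)) →
      (∑ j, (zopt j - y j) ^ 2) + ∑ i, lam i * ‖Fopt i‖ ^ 2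
        ≤ (∑ j, (z2 j - y j) ^ 2) + ∑ i, lam i * ‖F2 i‖ ^ 2)
    -- the algorithm iterates: `Z s` are the message variables and `F s` the agents'
    -- functions after `s` global steps
    (Z : ℕ → Fin n → ℝ) (F : ℕ → Fin m → H)
    (hZ0 : Z 0 = y) (hF0 : F 0 = 0)
    (hstep : ∀ s : ℕ, ∀ i : Fin m, i = ⟨s % m, Nat.mod_lt s hm⟩ →
      (∀ f : H,
        (∑ j ∈ Si i, ((inner ℝ (F (s + 1) i) (k (x j)) : ℝ) - Z s j) ^ 2
            + lam i * ‖F (s + 1) i - F s i‖ ^ 2)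
          ≤ ∑ j ∈ Si i, ((inner ℝ f (k (x j)) : ℝ) - Z s j) ^ 2
            + lam i * ‖f - F s i‖ ^ 2) ∧
      (∀ i2 : Fin m, i2 ≠ i → F (s + 1) i2 = F s i2) ∧
      (∀ j : Fin n,
        Z (s + 1) j = if j ∈ Si i then (inner ℝ (F (s + 1) i) (k (x j)) : ℝ) else Z s j)) :
    ∀ i : Fin m, Tendsto (fun T : ℕ => F (T * m) i) atTop (nhds (Fopt i)) :=
  collaborative_algorithm_converges_general k n m hm x y lam hlam Si zopt Fopt hfeas hmin Z F hZ0
    hF0 hstep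
end

section
/- In a Hilbert space H with closed convex sets C1,...,Cm having nonempty intersection C, the cyclic successive projection sequence (x_n) is bounded, and ‖x_n − x‖ converges for every x ∈ C; furthermore d(x_n, C_i) → 0 for each i. -/
/-!
Every projection step is attracting: if `p` is the nearest point of a convex set `K` to `v`
and `z ∈ K`, then `‖p - z‖² + ‖v - p‖² ≤ ‖v - z‖²`, since the angle at `p` between `v` and `z`
is obtuse. For `z` in the intersection the distances `‖x_n - z‖` therefore decrease (which gives
boundedness and convergence), and the squared step lengths are dominated by the telescoping
differences `‖x_n - z‖² - ‖x_{n+1} - z‖²`, so the steps tend to `0`. Every `m` consecutive steps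
visit each `C_i`, so `d(x_n, C_i)` is at most the sum of the next `m` step lengths.
-/

open Filter Topology Metric

theorem sq_norm_sub_add_sq_norm_sub_le_of_forall_norm_le
    {F : Type*} [NormedAddCommGroup F] [InnerProductSpace ℝ F] {K : Set F} (hK : Convex ℝ K)
    {p v z : F} (hp : p ∈ K) (hmin : ∀ w ∈ K, ‖p - v‖ ≤ ‖w - v‖) (hz : z ∈ K) :
    ‖p - z‖ ^ 2 + ‖v - p‖ ^ 2 ≤ ‖v - z‖ ^ 2 := by
  have : Nonempty K := ⟨⟨p, hp⟩⟩
  have hinf : ‖v - p‖ = ⨅ w : K, ‖v - w‖ := by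
    refine le_antisymm (le_ciInf fun w => ?_)
      (ciInf_le ⟨0, Set.forall_mem_range.mpr fun _ => norm_nonneg _⟩ (⟨p, hp⟩ : K))
    simpa only [norm_sub_rev v] using hmin w w.2
  have hobtuse : inner ℝ (v - p) (z - p) ≤ 0 :=
    (norm_eq_iInf_iff_real_inner_le_zero hK hp).mp hinf z hz
  have hexpand : ‖v - z‖ ^ 2 = ‖v - p‖ ^ 2 - 2 * inner ℝ (v - p) (z - p) + ‖p - z‖ ^ 2 := by
    rw [← sub_add_sub_cancel v p z, norm_add_sq_real, ← neg_sub z p, inner_neg_right]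
    ring
  linarith

section Attracting

variable {X : Type*} [PseudoMetricSpace X] {x : ℕ → X} {z : X}

theorem antitone_dist_of_dist_succ_sq_add_le
    (hx : ∀ s, dist (x (s + 1)) z ^ 2 + dist (x (s + 1)) (x s) ^ 2 ≤ dist (x s) z ^ 2) :
    Antitone fun s => dist (x s) z :=
  antitone_nat_of_succ_le fun s =>
    (pow_le_pow_iff_left₀ dist_nonneg dist_nonneg two_ne_zero).mp
      (by linarith [hx s, sq_nonneg (dist (x (s + 1)) (x s))])

theorem tendsto_dist_iInf_of_dist_succ_sq_add_le
    (hx : ∀ s, dist (x (s + 1)) z ^ 2 + dist (x (s + 1)) (x s) ^ 2 ≤ dist (x s) z ^ 2) :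
    Tendsto (fun s => dist (x s) z) atTop (𝓝 (⨅ s, dist (x s) z)) :=
  tendsto_atTop_ciInf (antitone_dist_of_dist_succ_sq_add_le hx)
    ⟨0, by rintro r ⟨s, rfl⟩; exact dist_nonneg⟩

theorem tendsto_dist_succ_of_dist_succ_sq_add_le
    (hx : ∀ s, dist (x (s + 1)) z ^ 2 + dist (x (s + 1)) (x s) ^ 2 ≤ dist (x s) z ^ 2) :
    Tendsto (fun s => dist (x s) (x (s + 1))) atTop (𝓝 0) := by
  have hlim := (tendsto_dist_iInf_of_dist_succ_sq_add_le hx).pow 2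
  have hdiff : Tendsto (fun s => dist (x s) z ^ 2 - dist (x (s + 1)) z ^ 2) atTop (𝓝 0) := by
    simpa using hlim.sub (hlim.comp (tendsto_add_atTop_nat 1))
  have hsq : Tendsto (fun s => dist (x s) (x (s + 1)) ^ 2) atTop (𝓝 0) :=
    tendsto_of_tendsto_of_tendsto_of_le_of_le tendsto_const_nhds hdiff
      (fun s => sq_nonneg _) fun s => by rw [dist_comm (x s)]; linarith [hx s]
  simpa [Real.sqrt_sq dist_nonneg] using hsq.sqrt

end Attracting

theorem tendsto_infDist_of_tendsto_dist_succ {X : Type*} [PseudoMetricSpace X] {x : ℕ → X}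
    {A : Set X} (m : ℕ) (hstep : Tendsto (fun s => dist (x s) (x (s + 1))) atTop (𝓝 0))
    (hA : ∀ s, ∃ k ≤ m, x (s + k) ∈ A) :
    Tendsto (fun s => infDist (x s) A) atTop (𝓝 0) := by
  have hsum : Tendsto (fun s => ∑ j ∈ Finset.range m, dist (x (s + j)) (x (s + j + 1)))
      atTop (𝓝 0) := by
    simpa using tendsto_finsetSum (Finset.range m) fun j _ =>
      hstep.comp (tendsto_add_atTop_nat j)
  refine tendsto_of_tendsto_of_tendsto_of_le_of_le tendsto_const_nhds hsum
    (fun s => infDist_nonneg) fun s => ?_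
  obtain ⟨k, hkm, hk⟩ := hA s
  calc infDist (x s) A ≤ dist (x s) (x (s + k)) := infDist_le_dist_of_mem hk
    _ ≤ ∑ j ∈ Finset.range k, dist (x (s + j)) (x (s + j + 1)) := by
      simpa [add_assoc] using dist_le_range_sum_dist (fun j => x (s + j)) k
    _ ≤ ∑ j ∈ Finset.range m, dist (x (s + j)) (x (s + j + 1)) :=
      Finset.sum_le_sum_of_subset_of_nonneg (Finset.range_subset_range.mpr hkm)
        fun _ _ _ => dist_nonneg

theorem Nat.exists_lt_add_mod_eq {m i : ℕ} (hi : i < m) : ∀ s, ∃ k < m, (s + k) % m = i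
  | 0 => ⟨i, hi, by simp [Nat.mod_eq_of_lt hi]⟩
  | s + 1 => by
    obtain ⟨k, hkm, hk⟩ := Nat.exists_lt_add_mod_eq hi s
    rcases k with _ | k
    · refine ⟨m - 1, by omega, ?_⟩
      rw [show s + 1 + (m - 1) = s + m by omega, Nat.add_mod_right]
      simpa using hk
    · exact ⟨k, by omega, by rwa [show s + 1 + k = s + (k + 1) by omega]⟩

theorem cyclic_projections_bounded_distances_general
    {H : Type*} [NormedAddCommGroup H] [InnerProductSpace ℝ H]
    (m : ℕ) (hm : 0 < m) (C : Fin m → Set H)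
    (hclosed : ∀ i, IsClosed (C i)) (hconv : ∀ i, Convex ℝ (C i))
    (hne : (⋂ i, C i).Nonempty)
    (P : Set H → H → H)
    (hP : ∀ S : Set H, IsClosed S → Convex ℝ S → S.Nonempty →
      ∀ v : H, P S v ∈ S ∧ ∀ w ∈ S, ‖P S v - v‖ ≤ ‖w - v‖)
    (x : ℕ → H)
    (hxit : ∀ s : ℕ, x (s + 1) = P (C ⟨s % m, Nat.mod_lt s hm⟩) (x s)) :
    Bornology.IsBounded (Set.range x) ∧
    (∀ xc ∈ ⋂ i, C i, ∃ L : ℝ, Tendsto (fun s : ℕ => ‖x s - xc‖) atTop (nhds L)) ∧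
    (∀ i : Fin m, Tendsto (fun s : ℕ => Metric.infDist (x s) (C i)) atTop (nhds 0)) := by
  obtain ⟨z, hz⟩ := hne
  have hproj (s : ℕ) :=
    hP (C ⟨s % m, Nat.mod_lt s hm⟩) (hclosed _) (hconv _) ⟨z, Set.mem_iInter.mp hz _⟩ (x s)
  have hattract : ∀ c ∈ ⋂ i, C i, ∀ s,
      dist (x (s + 1)) c ^ 2 + dist (x (s + 1)) (x s) ^ 2 ≤ dist (x s) c ^ 2 := by
    intro c hc s
    simpa only [dist_eq_norm, hxit s, norm_sub_rev (x s)] using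
      sq_norm_sub_add_sq_norm_sub_le_of_forall_norm_le (hconv _) (hproj s).1 (hproj s).2
        (Set.mem_iInter.mp hc _)
  refine ⟨?_, fun c hc => ⟨⨅ s, dist (x s) c, ?_⟩, fun i => ?_⟩
  · refine (isBounded_closedBall (x := z) (r := dist (x 0) z)).subset ?_
    rintro _ ⟨s, rfl⟩
    exact antitone_dist_of_dist_succ_sq_add_le (hattract z hz) (Nat.zero_le s)
  · simpa only [dist_eq_norm] using tendsto_dist_iInf_of_dist_succ_sq_add_le (hattract c hc)
  · refine tendsto_infDist_of_tendsto_dist_succ m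
      (tendsto_dist_succ_of_dist_succ_sq_add_le (hattract z hz)) fun s => ?_
    obtain ⟨k, hkm, hk⟩ := Nat.exists_lt_add_mod_eq i.isLt s
    refine ⟨k + 1, hkm, ?_⟩
    simpa [← add_assoc, hk, hxit] using (hproj (s + k)).1

/-- Cyclic successive projections onto closed convex sets with nonempty intersection:
the iterates are bounded, `‖x_n − x‖` converges for every `x` in the intersection, and
the distance of the iterates to each set `C_i` tends to `0`. -/
theorem cyclic_projections_bounded_distances
    {H : Type*} [NormedAddCommGroup H] [InnerProductSpace ℝ H] [CompleteSpace H]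
    (m : ℕ) (hm : 0 < m) (C : Fin m → Set H)
    (hclosed : ∀ i, IsClosed (C i)) (hconv : ∀ i, Convex ℝ (C i))
    (hne : (⋂ i, C i).Nonempty)
    (P : Set H → H → H)
    (hP : ∀ S : Set H, IsClosed S → Convex ℝ S → S.Nonempty →
      ∀ v : H, P S v ∈ S ∧ ∀ w ∈ S, ‖P S v - v‖ ≤ ‖w - v‖)
    (xhat : H) (x : ℕ → H) (hx0 : x 0 = xhat)
    (hxit : ∀ s : ℕ, x (s + 1) = P (C ⟨s % m, Nat.mod_lt s hm⟩) (x s)) :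
    Bornology.IsBounded (Set.range x) ∧
    (∀ xc ∈ ⋂ i, C i, ∃ L : ℝ, Tendsto (fun s : ℕ => ‖x s - xc‖) atTop (nhds L)) ∧
    (∀ i : Fin m, Tendsto (fun s : ℕ => Metric.infDist (x s) (C i)) atTop (nhds 0)) :=
  cyclic_projections_bounded_distances_general m hm C hclosed hconv hne P hP x hxit
end
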